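/- arXiv:1707.06000 — 6 statements merged into one kernel-verified Lean document; each statement's English description precedes it below -/
import Mathlib

section
/- Let A be a Hermitian q×q complex matrix and let B := [[I, A], [−A⁺, I − A⁺A]] be the corresponding 2q×2q block matrix, where A⁺ denotes the Moore–Penrose inverse of A. Then B* (−J) B = −J, where J := [[0, −iI], [iI, 0]] is the 2q×2q signature matrix. -/
open Matrix

/-- `X` is the Moore–Penrose inverse of `A`. -/
def IsMoorePenrose {p q : ℕ} (A : Matrix (Fin p) (Fin q) ℂ)
    (X : Matrix (Fin q) (Fin p) ℂ) : Prop :=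
  A * X * A = A ∧ X * A * X = X ∧ (A * X)ᴴ = A * X ∧ (X * A)ᴴ = X * A

lemma mp_unique {p q : ℕ} (A : Matrix (Fin p) (Fin q) ℂ)
    (X Y : Matrix (Fin q) (Fin p) ℂ)
    (hX : IsMoorePenrose A X) (hY : IsMoorePenrose A Y) : X = Y := by
  obtain ⟨hX1, hX2, hX3, hX4⟩ := hX
  obtain ⟨hY1, hY2, hY3, hY4⟩ := hY
  have h1 : A * X = A * Y := by
    calc A * X = (A * X)ᴴ := hX3.symm
      _ = Xᴴ * Aᴴ := by rw [conjTranspose_mul]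
      _ = Xᴴ * (A * Y * A)ᴴ := by rw [hY1]
      _ = Xᴴ * (Aᴴ * (Yᴴ * Aᴴ)) := by simp only [conjTranspose_mul, Matrix.mul_assoc]
      _ = (Xᴴ * Aᴴ) * (Yᴴ * Aᴴ) := by simp only [Matrix.mul_assoc]
      _ = (A * X)ᴴ * (A * Y)ᴴ := by simp only [conjTranspose_mul]
      _ = (A * X) * (A * Y) := by rw [hX3, hY3]
      _ = (A * X * A) * Y := by simp only [Matrix.mul_assoc]
      _ = A * Y := by rw [hX1]
  have h2 : X * A = Y * A := by
    calc X * A = (X * A)ᴴ := hX4.symm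
      _ = Aᴴ * Xᴴ := by rw [conjTranspose_mul]
      _ = (A * Y * A)ᴴ * Xᴴ := by rw [hY1]
      _ = Aᴴ * (Yᴴ * (Aᴴ * Xᴴ)) := by simp only [conjTranspose_mul, Matrix.mul_assoc]
      _ = (Y * A)ᴴ * (X * A)ᴴ := by simp only [conjTranspose_mul, Matrix.mul_assoc]
      _ = (Y * A) * (X * A) := by rw [hX4, hY4]
      _ = Y * (A * X * A) := by simp only [Matrix.mul_assoc]
      _ = Y * A := by rw [hX1]
  calc X = X * A * X := hX2.symm
    _ = Y * A * X := by rw [h2]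
    _ = Y * (A * X) := by rw [Matrix.mul_assoc]
    _ = Y * (A * Y) := by rw [h1]
    _ = Y * A * Y := by rw [Matrix.mul_assoc]
    _ = Y := hY2

/-- for Hermitian `A` and `B = [[I, A], [−A⁺, I − A⁺A]]` one has
`Bᴴ (−J) B = −J` with `J = [[0, −iI], [iI, 0]]`. -/
theorem stmt1 {q : ℕ} (A X : Matrix (Fin q) (Fin q) ℂ)
    (hA : A.IsHermitian) (hX : IsMoorePenrose A X) :
    (Matrix.fromBlocks (1 : Matrix (Fin q) (Fin q) ℂ) A (-X) (1 - X * A))ᴴ *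
        (-(Matrix.fromBlocks (0 : Matrix (Fin q) (Fin q) ℂ)
            (-(Complex.I • (1 : Matrix (Fin q) (Fin q) ℂ)))
            (Complex.I • (1 : Matrix (Fin q) (Fin q) ℂ)) 0)) *
        Matrix.fromBlocks (1 : Matrix (Fin q) (Fin q) ℂ) A (-X) (1 - X * A) =
      -(Matrix.fromBlocks (0 : Matrix (Fin q) (Fin q) ℂ)
          (-(Complex.I • (1 : Matrix (Fin q) (Fin q) ℂ)))
          (Complex.I • (1 : Matrix (Fin q) (Fin q) ℂ)) 0) := by
  have hAH : Aᴴ = A := hA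
  obtain ⟨h1, h2, h3, h4⟩ := hX
  have hXH : Xᴴ = X := by
    apply mp_unique A
    · refine ⟨?_, ?_, ?_, ?_⟩
      · calc A * Xᴴ * A = Aᴴ * Xᴴ * Aᴴ := by rw [hAH]
          _ = (A * X * A)ᴴ := by simp only [conjTranspose_mul, Matrix.mul_assoc]
          _ = Aᴴ := by rw [h1]
          _ = A := hAH
      · calc Xᴴ * A * Xᴴ = Xᴴ * Aᴴ * Xᴴ := by rw [hAH]
          _ = (X * A * X)ᴴ := by simp only [conjTranspose_mul, Matrix.mul_assoc]
          _ = Xᴴ := by rw [h2]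
      · have hx : A * Xᴴ = X * A := by
          calc A * Xᴴ = (X * Aᴴ)ᴴ := by simp only [conjTranspose_mul, conjTranspose_conjTranspose]
            _ = (X * A)ᴴ := by rw [hAH]
            _ = X * A := h4
        rw [hx]; exact h4
      · have hx : Xᴴ * A = A * X := by
          calc Xᴴ * A = (Aᴴ * X)ᴴ := by simp only [conjTranspose_mul, conjTranspose_conjTranspose]
            _ = (A * X)ᴴ := by rw [hAH]
            _ = A * X := h3
        rw [hx]; exact h3
    · exact ⟨h1, h2, h3, h4⟩
  rw [Matrix.fromBlocks_conjTranspose, Matrix.fromBlocks_neg,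
    Matrix.fromBlocks_multiply, Matrix.fromBlocks_multiply]
  have hsub : (1 - X * A)ᴴ = 1 - A * X := by
    rw [conjTranspose_sub, conjTranspose_one, conjTranspose_mul, hAH, hXH]
  rw [hsub, conjTranspose_one, conjTranspose_neg, hXH, hAH]
  have h1' : A * (X * A) = A := by rw [← Matrix.mul_assoc, h1]
  rw [Matrix.fromBlocks_inj]
  refine ⟨?_, ?_, ?_, ?_⟩ <;>
    · simp only [Matrix.neg_mul, Matrix.mul_neg, smul_mul_assoc, mul_smul_comm,
        Matrix.sub_mul, Matrix.mul_sub, Matrix.one_mul, Matrix.mul_one, Matrix.zero_mul,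
        Matrix.mul_zero, neg_zero, zero_add, add_zero, neg_neg, smul_sub,
        Matrix.mul_assoc, h1', smul_smul]
      module
end

section
/- Let E be a (p+q)×(p+q) complex matrix with block partition E = [[a, b], [c, d]] where a is p×p. Then E is positive semidefinite if and only if a is positive semidefinite, the column space of b is contained in the column space of a, c = b*, and d − c a⁺ b is positive semidefinite (where a⁺ is the Moore–Penrose inverse of a). -/
open Matrix
open scoped ComplexOrder

lemma quadAux {p q : ℕ} (a : Matrix (Fin p) (Fin p) ℂ) (b : Matrix (Fin p) (Fin q) ℂ)
    (c : Matrix (Fin q) (Fin p) ℂ) (d : Matrix (Fin q) (Fin q) ℂ)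
    (x : Fin p → ℂ) (y : Fin q → ℂ) :
    star (Sum.elim x y) ⬝ᵥ (fromBlocks a b c d) *ᵥ (Sum.elim x y) =
      star x ⬝ᵥ a *ᵥ x + star x ⬝ᵥ b *ᵥ y + star y ⬝ᵥ c *ᵥ x + star y ⬝ᵥ d *ᵥ y := by
  simp [Function.star_sumElim, fromBlocks_mulVec, sumElim_dotProduct_sumElim,
    dotProduct_add]
  ring

section Aux
variable {p q : ℕ} {a X : Matrix (Fin p) (Fin p) ℂ} {b : Matrix (Fin p) (Fin q) ℂ}
  {d : Matrix (Fin q) (Fin q) ℂ}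

lemma hhermAux (hab : a * X * b = b) (ha : a.IsHermitian) : bᴴ * Xᴴ * a = bᴴ := by
  have h := congrArg conjTranspose hab
  rwa [conjTranspose_mul, conjTranspose_mul, ha.eq, ← Matrix.mul_assoc] at h

lemma bXbAux (hab : a * X * b = b) (ha : a.IsHermitian) : bᴴ * Xᴴ * b = bᴴ * X * b := by
  have h := hhermAux hab ha
  calc bᴴ * Xᴴ * b = bᴴ * Xᴴ * (a * (X * b)) := by
        rw [← Matrix.mul_assoc a X b, hab]
    _ = (bᴴ * Xᴴ * a) * (X * b) := by simp only [Matrix.mul_assoc]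
    _ = bᴴ * (X * b) := by rw [h]
    _ = bᴴ * X * b := by simp only [Matrix.mul_assoc]

lemma habOfRange (hX : IsMoorePenrose a X)
    (hr : ∀ y, (∃ x, b *ᵥ x = y) → ∃ x, a *ᵥ x = y) : a * X * b = b := by
  choose f hf using fun j => hr (b *ᵥ Pi.single j 1) ⟨_, rfl⟩
  set U : Matrix (Fin p) (Fin q) ℂ := Matrix.of fun i j => f j i with hUdef
  have hU : a * U = b := by
    ext i j
    have h : (a *ᵥ f j) i = b i j := by rw [hf j]; simp
    simpa [Matrix.mul_apply, mulVec, dotProduct, U] using h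
  rw [← hU, ← Matrix.mul_assoc, hX.1]

lemma congrAux (hab : a * X * b = b) (ha : a.IsHermitian) :
    fromBlocks a b bᴴ d =
      (fromBlocks 1 (X * b) 0 1)ᴴ * fromBlocks a 0 0 (d - bᴴ * X * b) *
        (fromBlocks 1 (X * b) 0 1) := by
  rw [fromBlocks_conjTranspose, fromBlocks_multiply, fromBlocks_multiply]
  simp [← Matrix.mul_assoc, hab, hhermAux hab ha]

lemma blockDiagPSD {s : Matrix (Fin q) (Fin q) ℂ} (ha : a.PosSemidef) (hs : s.PosSemidef) :
    (fromBlocks a 0 0 s).PosSemidef := by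
  refine PosSemidef.of_dotProduct_mulVec_nonneg (isHermitian_fromBlocks_iff.2 ⟨ha.1, by simp, by simp, hs.1⟩) fun v => ?_
  have key := quadAux a 0 0 s (v ∘ Sum.inl) (v ∘ Sum.inr)
  rw [Sum.elim_comp_inl_inr] at key
  rw [key]
  simp only [Matrix.zero_mulVec, dotProduct_zero, add_zero, zero_add]
  exact add_nonneg (ha.dotProduct_mulVec_nonneg _) (hs.dotProduct_mulVec_nonneg _)

lemma habOfPSD (ha : a.IsHermitian) (hX : IsMoorePenrose a X)
    (hker : ∀ x : Fin p → ℂ, a *ᵥ x = 0 → bᴴ *ᵥ x = 0) : a * X * b = b := by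
  obtain ⟨h1, h2, h3, h4⟩ := hX
  have haX : a * (a * X) = a := by
    have hX' : a * X = Xᴴ * a := by
      rw [← h3, conjTranspose_mul, ha.eq]
    have haXa : a * Xᴴ * a = a := by
      have h := congrArg conjTranspose h1
      rwa [conjTranspose_mul, conjTranspose_mul, ha.eq, ← Matrix.mul_assoc] at h
    rw [hX', ← Matrix.mul_assoc, haXa]
  have hP : a * (1 - a * X) = 0 := by
    rw [Matrix.mul_sub, Matrix.mul_one, haX, sub_self]
  have hbP : bᴴ * (1 - a * X) = 0 := by
    ext i j
    have hz : a *ᵥ ((1 - a * X) *ᵥ Pi.single j 1) = 0 := by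
      rw [mulVec_mulVec, hP, zero_mulVec]
    have h := congrFun (hker _ hz) i
    simp only [mulVec_mulVec, mulVec_single, mul_one, MulOpposite.op_one, one_smul] at h
    exact h
  have h6 := congrArg conjTranspose hbP
  rw [conjTranspose_mul, conjTranspose_zero, conjTranspose_sub, conjTranspose_one,
    conjTranspose_mul, show Xᴴ * aᴴ = a * X by rw [← conjTranspose_mul, h3],
    conjTranspose_conjTranspose] at h6
  have h5 : b - a * X * b = 0 := by rwa [Matrix.sub_mul, Matrix.one_mul] at h6
  rw [sub_eq_zero] at h5
  exact h5.symm

lemma kernelAux {a : Matrix (Fin p) (Fin p) ℂ} {b : Matrix (Fin p) (Fin q) ℂ}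
    {d : Matrix (Fin q) (Fin q) ℂ}
    (hE : (fromBlocks a b bᴴ d).PosSemidef) {x : Fin p → ℂ}
    (hx : a *ᵥ x = 0) : bᴴ *ᵥ x = 0 := by
  by_contra hne
  set u : Fin q → ℂ := bᴴ *ᵥ x with hu
  have hd : d.PosSemidef := by
    have h := hE.submatrix Sum.inr
    have e : (fromBlocks a b bᴴ d).submatrix (Sum.inr : Fin q → _) Sum.inr = d := by
      ext i j; rfl
    rwa [e] at h
  have hs : (0:ℂ) < star u ⬝ᵥ u :=
    (dotProduct_star_self_nonneg u).lt_of_ne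
      (fun h => hne (dotProduct_star_self_eq_zero.mp h.symm))
  have hr : (0:ℂ) ≤ star u ⬝ᵥ d *ᵥ u := hd.dotProduct_mulVec_nonneg u
  have hcross : star x ⬝ᵥ b *ᵥ u = star u ⬝ᵥ u := by
    rw [dotProduct_mulVec]
    congr 1
    rw [hu, star_mulVec, conjTranspose_conjTranspose]
  set s : ℝ := (star u ⬝ᵥ u).re with hsdef
  set r : ℝ := (star u ⬝ᵥ d *ᵥ u).re with hrdef
  have hsr : star u ⬝ᵥ u = (s:ℂ) := Complex.eq_re_of_ofReal_le hs.le
  have hrr : star u ⬝ᵥ d *ᵥ u = (r:ℂ) := Complex.eq_re_of_ofReal_le hr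
  have hspos : 0 < s := by
    rw [hsr] at hs; exact Complex.zero_lt_real.mp hs
  have hrnn : 0 ≤ r := by
    rw [hrr] at hr; exact Complex.zero_le_real.mp hr
  set t : ℝ := s / (r + 1) with ht
  have htpos : 0 < t := div_pos hspos (by linarith)
  have hts : t * (r + 1) = s := by
    rw [ht]; exact div_mul_cancel₀ _ (ne_of_gt (by linarith))
  have hq := hE.dotProduct_mulVec_nonneg (Sum.elim x (-(t:ℂ) • u))
  rw [quadAux] at hq
  rw [hx, dotProduct_zero] at hq
  have e2 : star x ⬝ᵥ b *ᵥ (-(t:ℂ) • u) = -((t:ℂ) * (s:ℂ)) := by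
    rw [mulVec_smul, dotProduct_smul, hcross, hsr]
    simp
  have e3 : star (-(t:ℂ) • u) ⬝ᵥ bᴴ *ᵥ x = -((t:ℂ) * (s:ℂ)) := by
    rw [star_smul, smul_dotProduct, ← hu, hsr]
    simp [Complex.star_def]
  have e4 : star (-(t:ℂ) • u) ⬝ᵥ d *ᵥ (-(t:ℂ) • u) = (t:ℂ)^2 * (r:ℂ) := by
    rw [star_smul, smul_dotProduct, mulVec_smul, dotProduct_smul, hrr]
    simp [Complex.star_def]
    ring
  rw [e2, e3, e4] at hq
  have hq' : (0:ℂ) ≤ (((t^2 * r - 2 * t * s : ℝ)) : ℂ) := by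
    convert hq using 1
    push_cast
    ring
  have : (0:ℝ) ≤ t^2 * r - 2 * t * s := Complex.zero_le_real.mp hq'
  nlinarith [mul_pos htpos hspos, sq_nonneg t, mul_pos htpos htpos]

end Aux

/-- the block matrix `E = [[a, b], [c, d]]` is positive semidefinite iff
`a ⪰ 0`, `range b ⊆ range a`, `c = bᴴ` and `d − c a⁺ b ⪰ 0`. -/
theorem stmt4 {p q : ℕ} (a : Matrix (Fin p) (Fin p) ℂ) (b : Matrix (Fin p) (Fin q) ℂ)
    (c : Matrix (Fin q) (Fin p) ℂ) (d : Matrix (Fin q) (Fin q) ℂ)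
    (X : Matrix (Fin p) (Fin p) ℂ) (hX : IsMoorePenrose a X) :
    (Matrix.fromBlocks a b c d).PosSemidef ↔
      a.PosSemidef ∧ (∀ y : Fin p → ℂ, (∃ x, b.mulVec x = y) → ∃ x, a.mulVec x = y) ∧
        c = bᴴ ∧ (d - c * X * b).PosSemidef := by
  constructor
  · intro hE
    obtain ⟨haH, hbc, hcb, hdH⟩ := isHermitian_fromBlocks_iff.mp hE.1
    subst hbc
    have ha : a.PosSemidef := by
      have h := hE.submatrix (Sum.inl : Fin p → Fin p ⊕ Fin q)
      have e : (fromBlocks a b bᴴ d).submatrix (Sum.inl : Fin p → _) Sum.inl = a := by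
        ext i j; rfl
      rwa [e] at h
    have hab : a * X * b = b := habOfPSD haH hX (fun x hx => kernelAux hE hx)
    refine ⟨ha, ?_, rfl, ?_⟩
    · rintro y ⟨x, rfl⟩
      exact ⟨X *ᵥ (b *ᵥ x), by
        rw [mulVec_mulVec, mulVec_mulVec, hab]⟩
    · have hW : (fromBlocks 1 (X * b) 0 1 : Matrix (Fin p ⊕ Fin q) (Fin p ⊕ Fin q) ℂ) *
          (fromBlocks 1 (-(X * b)) 0 1) = 1 := by
        have h1 : fromBlocks (1 : Matrix (Fin p) (Fin p) ℂ) 0 0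
            (1 : Matrix (Fin q) (Fin q) ℂ) = (1 : Matrix (Fin p ⊕ Fin q) (Fin p ⊕ Fin q) ℂ) :=
          fromBlocks_one
        rw [fromBlocks_multiply, ← h1]
        simp
      have hD : (fromBlocks a 0 0 (d - bᴴ * X * b)).PosSemidef := by
        have h := hE.conjTranspose_mul_mul_same
          (fromBlocks 1 (-(X * b)) 0 1 : Matrix (Fin p ⊕ Fin q) (Fin p ⊕ Fin q) ℂ)
        rw [congrAux hab haH] at h
        have e : (fromBlocks 1 (-(X * b)) 0 1)ᴴ *
            ((fromBlocks 1 (X * b) 0 1)ᴴ * fromBlocks a 0 0 (d - bᴴ * X * b) *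
              fromBlocks 1 (X * b) 0 1) * (fromBlocks 1 (-(X * b)) 0 1) =
            (fromBlocks 1 (X * b) 0 1 * fromBlocks 1 (-(X * b)) 0 1)ᴴ *
              fromBlocks a 0 0 (d - bᴴ * X * b) *
              (fromBlocks 1 (X * b) 0 1 * fromBlocks 1 (-(X * b)) 0 1) := by
          rw [conjTranspose_mul]
          simp only [Matrix.mul_assoc]
        rw [e, hW, conjTranspose_one, Matrix.one_mul, Matrix.mul_one] at h
        exact h
      have e2 : (fromBlocks a 0 0 (d - bᴴ * X * b)).submatrix
          (Sum.inr : Fin q → Fin p ⊕ Fin q) Sum.inr = d - bᴴ * X * b := by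
        ext i j; rfl
      have h := hD.submatrix (Sum.inr : Fin q → Fin p ⊕ Fin q)
      rwa [e2] at h
  · rintro ⟨ha, hrange, rfl, hS⟩
    have hab : a * X * b = b := habOfRange hX hrange
    rw [congrAux hab ha.1]
    exact (blockDiagPSD ha hS).conjTranspose_mul_mul_same _
end

section
/- Let α ∈ C, A ∈ C^{p×q}, z ∈ C with z ≠ α, and let X ∈ C^{p×q} satisfy range(A) ⊆ range(X) and null(A) ⊆ null(X). Then the matrix −(z−α)A⁺X + I_q − A⁺A is invertible and its inverse equals −(z−α)⁻¹X⁺A + I_q − A⁺A. -/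
open Matrix

lemma ext_of_mulVec {p q : ℕ} (M N : Matrix (Fin p) (Fin q) ℂ)
    (h : ∀ u, M *ᵥ u = N *ᵥ u) : M = N := by
  ext i j
  have := congrFun (h (Pi.single j 1)) i
  simpa using this

/-- if `z ≠ α`, `range A ⊆ range X` and `null A ⊆ null X`, then
`−(z−α)A⁺X + I − A⁺A` is invertible with inverse `−(z−α)⁻¹X⁺A + I − A⁺A`. -/
theorem stmt12 {p q : ℕ} (α z : ℂ) (hz : z ≠ α)
    (A X : Matrix (Fin p) (Fin q) ℂ)
    (Y Z : Matrix (Fin q) (Fin p) ℂ)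
    (hY : IsMoorePenrose A Y) (hZ : IsMoorePenrose X Z)
    (hran : ∀ v : Fin p → ℂ, (∃ u, A.mulVec u = v) → ∃ u, X.mulVec u = v)
    (hnul : ∀ u : Fin q → ℂ, A.mulVec u = 0 → X.mulVec u = 0) :
    (-(z - α) • (Y * X) + 1 - Y * A) * (-(z - α)⁻¹ • (Z * A) + 1 - Y * A) = 1 ∧
    (-(z - α)⁻¹ • (Z * A) + 1 - Y * A) * (-(z - α) • (Y * X) + 1 - Y * A) = 1 := by
  obtain ⟨hY1, hY2, hY3, hY4⟩ := hY
  obtain ⟨hZ1, hZ2, hZ3, hZ4⟩ := hZ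
  have hs : z - α ≠ 0 := sub_ne_zero.mpr hz
  -- range A ⊆ range X gives X*Z*A = A
  have e1 : X * Z * A = A := by
    apply ext_of_mulVec
    intro u
    obtain ⟨w, hw⟩ := hran (A *ᵥ u) ⟨u, rfl⟩
    calc (X * Z * A) *ᵥ u = (X * Z) *ᵥ (A *ᵥ u) := by rw [← mulVec_mulVec]
      _ = (X * Z) *ᵥ (X *ᵥ w) := by rw [hw]
      _ = (X * Z * X) *ᵥ w := by rw [mulVec_mulVec]
      _ = X *ᵥ w := by rw [hZ1]
      _ = A *ᵥ u := hw
  -- null A ⊆ null X gives X*(Y*A) = X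
  have e2 : X * (Y * A) = X := by
    have h0 : X * (1 - Y * A) = 0 := by
      apply ext_of_mulVec
      intro u
      rw [← mulVec_mulVec]
      have hA : A *ᵥ ((1 - Y * A) *ᵥ u) = 0 := by
        rw [mulVec_mulVec, Matrix.mul_sub, Matrix.mul_one, ← Matrix.mul_assoc, hY1,
          sub_self, zero_mulVec]
      rw [hnul _ hA, zero_mulVec]
    rw [Matrix.mul_sub, Matrix.mul_one, sub_eq_zero] at h0
    exact h0.symm
  -- Y*A*Z = Z
  have h1 : (Y * A) * Xᴴ = Xᴴ := by
    have := congrArg conjTranspose e2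
    rwa [conjTranspose_mul, hY4] at this
  have hZX : Z * X = Xᴴ * Zᴴ := by
    conv_lhs => rw [← hZ4]
    rw [conjTranspose_mul]
  have e3 : Y * A * Z = Z := by
    calc Y * A * Z = Y * A * (Z * X * Z) := by rw [hZ2]
      _ = Y * A * (Xᴴ * Zᴴ * Z) := by rw [hZX]
      _ = (Y * A * Xᴴ) * (Zᴴ * Z) := by simp only [Matrix.mul_assoc]
      _ = Xᴴ * (Zᴴ * Z) := by rw [h1]
      _ = Z * X * Z := by rw [hZX, Matrix.mul_assoc]
      _ = Z := hZ2
  -- product identities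
  have hp1 : (Y * X) * (Z * A) = Y * A := by
    rw [Matrix.mul_assoc Y X (Z * A), ← Matrix.mul_assoc X Z A, e1]
  have hp2 : (Y * X) * (Y * A) = Y * X := by
    rw [Matrix.mul_assoc Y X (Y * A), e2]
  have hp3 : (Y * A) * (Z * A) = Z * A := by
    rw [← Matrix.mul_assoc (Y * A) Z A, e3]
  have hp4 : (Y * A) * (Y * A) = Y * A := by
    rw [← Matrix.mul_assoc (Y * A) Y A, hY2]
  have key : (-(z - α) • (Y * X) + 1 - Y * A) * (-(z - α)⁻¹ • (Z * A) + 1 - Y * A) = 1 := by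
    simp only [Matrix.sub_mul, Matrix.mul_sub, Matrix.add_mul, Matrix.mul_add, Matrix.one_mul,
      Matrix.mul_one, smul_mul_assoc, mul_smul_comm, smul_smul, hp1, hp2, hp3, hp4,
      add_sub_cancel_right]
    rw [show -(z - α)⁻¹ * -(z - α) = 1 by field_simp, one_smul]
    abel
  exact ⟨key, mul_eq_one_comm.mp key⟩
end

section
/- Let α ∈ R, let A ∈ C^{p×q}, and for z ∈ C define V_A(z) := [[0, −A], [(z−α)A⁺, (z−α)I_q]] and W_A(z) := [[(z−α)I_p, A], [−(z−α)A⁺, I_q − A⁺A]] as (p+q)×(p+q) block matrices. Then for every z ∈ C, V_A(z) W_A(z) = (z−α)·diag(AA⁺, I_q) and W_A(z) V_A(z) = (z−α)·diag(AA⁺, I_q). -/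
open Matrix

/-- `V_A(z) W_A(z) = (z−α)·diag(AA⁺, I)` and
`W_A(z) V_A(z) = (z−α)·diag(AA⁺, I)` for all `z ∈ ℂ`. -/
theorem stmt13 {p q : ℕ} (α : ℝ) (A : Matrix (Fin p) (Fin q) ℂ)
    (Y : Matrix (Fin q) (Fin p) ℂ) (hY : IsMoorePenrose A Y) (z : ℂ) :
    Matrix.fromBlocks (0 : Matrix (Fin p) (Fin p) ℂ) (-A)
          ((z - (α : ℂ)) • Y) ((z - (α : ℂ)) • (1 : Matrix (Fin q) (Fin q) ℂ)) *
        Matrix.fromBlocks ((z - (α : ℂ)) • (1 : Matrix (Fin p) (Fin p) ℂ)) A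
          (-((z - (α : ℂ)) • Y)) (1 - Y * A) =
      (z - (α : ℂ)) • Matrix.fromBlocks (A * Y) 0 0 (1 : Matrix (Fin q) (Fin q) ℂ) ∧
    Matrix.fromBlocks ((z - (α : ℂ)) • (1 : Matrix (Fin p) (Fin p) ℂ)) A
          (-((z - (α : ℂ)) • Y)) (1 - Y * A) *
        Matrix.fromBlocks (0 : Matrix (Fin p) (Fin p) ℂ) (-A)
          ((z - (α : ℂ)) • Y) ((z - (α : ℂ)) • (1 : Matrix (Fin q) (Fin q) ℂ)) =
      (z - (α : ℂ)) • Matrix.fromBlocks (A * Y) 0 0 (1 : Matrix (Fin q) (Fin q) ℂ) := by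
  obtain ⟨h1, h2, _, _⟩ := hY
  constructor <;>
  · rw [Matrix.fromBlocks_multiply, Matrix.fromBlocks_smul]
    congr 1 <;> try congr 1
    all_goals
      simp [Matrix.mul_smul, Matrix.smul_mul, mul_sub, sub_mul, Matrix.mul_sub,
        Matrix.sub_mul, smul_smul, mul_comm, ← Matrix.mul_assoc, h1, h2, smul_sub]
end

section
/- Let α ∈ R and let B be a Hermitian q×q complex matrix. Let V_B(z) := [[0, −B], [(z−α)B⁺, (z−α)I_q]]. Then for every z ∈ C: V_B(z)* (−J) V_B(z) = diag((z−α)B, B⁺)* (−J) diag((z−α)B, B⁺) + 2 Im(z) · diag(0, B), where J = [[0, −iI_q], [iI_q, 0]]. -/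
open Matrix

/-- The `2q × 2q` signature matrix `J = [[0, −iI], [iI, 0]]`. -/
def Jmat (q : ℕ) : Matrix (Fin q ⊕ Fin q) (Fin q ⊕ Fin q) ℂ :=
  Matrix.fromBlocks 0 (-(Complex.I • (1 : Matrix (Fin q) (Fin q) ℂ)))
    (Complex.I • (1 : Matrix (Fin q) (Fin q) ℂ)) 0

/-- for Hermitian `B`,
`V_B(z)ᴴ (−J) V_B(z) = diag((z−α)B, B⁺)ᴴ (−J) diag((z−α)B, B⁺) + 2 Im(z)·diag(0, B)`. -/
theorem stmt15 {q : ℕ} (α : ℝ) (B Y : Matrix (Fin q) (Fin q) ℂ)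
    (hB : B.IsHermitian) (hY : IsMoorePenrose B Y) (z : ℂ) :
    (Matrix.fromBlocks (0 : Matrix (Fin q) (Fin q) ℂ) (-B)
          ((z - (α : ℂ)) • Y) ((z - (α : ℂ)) • (1 : Matrix (Fin q) (Fin q) ℂ)))ᴴ *
        (-(Jmat q)) *
        Matrix.fromBlocks (0 : Matrix (Fin q) (Fin q) ℂ) (-B)
          ((z - (α : ℂ)) • Y) ((z - (α : ℂ)) • (1 : Matrix (Fin q) (Fin q) ℂ)) =
      (Matrix.fromBlocks ((z - (α : ℂ)) • B) 0 0 Y)ᴴ * (-(Jmat q)) *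
          Matrix.fromBlocks ((z - (α : ℂ)) • B) 0 0 Y +
        ((2 * z.im : ℝ) : ℂ) • Matrix.fromBlocks (0 : Matrix (Fin q) (Fin q) ℂ) 0 0 B := by
  have hBH : Bᴴ = B := hB
  have hkey : Yᴴ * B = B * Y := by
    have h := hY.2.2.1
    rw [conjTranspose_mul, hBH] at h
    exact h
  simp only [Jmat, Matrix.fromBlocks_conjTranspose, Matrix.fromBlocks_neg, neg_neg, neg_zero,
    Matrix.fromBlocks_multiply, Matrix.fromBlocks_add, Matrix.fromBlocks_smul,
    conjTranspose_neg, conjTranspose_smul, conjTranspose_one, conjTranspose_zero, hBH,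
    Matrix.mul_zero, Matrix.zero_mul, Matrix.mul_one, Matrix.one_mul, Matrix.smul_mul,
    Matrix.mul_smul, zero_add, add_zero, Matrix.mul_neg, Matrix.neg_mul, smul_zero,
    smul_neg, neg_smul]
  have h22 : Complex.I • star (z - (α:ℂ)) • B + -((z - (α:ℂ)) • Complex.I • B)
      = ((2 * z.im : ℝ) : ℂ) • B := by
    rw [smul_smul, smul_smul, ← neg_smul, ← add_smul]
    congr 1
    simp only [Complex.star_def, Complex.ext_iff, Complex.add_re, Complex.add_im, Complex.neg_re, Complex.neg_im,
      Complex.sub_re, Complex.sub_im, Complex.mul_re, Complex.mul_im,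
      Complex.I_re, Complex.I_im, map_sub, Complex.conj_re, Complex.conj_im, Complex.ofReal_re,
      Complex.ofReal_im, Complex.ofReal_mul]
    constructor <;> ring
  rw [hkey, h22]
end

section
/- Let α ∈ R and let B be a Hermitian q×q complex matrix. Let V_B(z) := [[0, −B], [(z−α)B⁺, (z−α)I_q]]. Then for every z ∈ C: [diag((z−α)I_q, I_q)·V_B(z)]* (−J) [diag((z−α)I_q, I_q)·V_B(z)] = |z−α|² · diag(B, B⁺)* (−J) diag(B, B⁺), where J = [[0, −iI_q], [iI_q, 0]]. -/
open Matrix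

/-- for Hermitian `B`,
`[diag((z−α)I, I)·V_B(z)]ᴴ (−J) [diag((z−α)I, I)·V_B(z)]
  = |z−α|² · diag(B, B⁺)ᴴ (−J) diag(B, B⁺)`. -/
theorem stmt16 {q : ℕ} (α : ℝ) (B Y : Matrix (Fin q) (Fin q) ℂ)
    (hB : B.IsHermitian) (hY : IsMoorePenrose B Y) (z : ℂ) :
    (Matrix.fromBlocks ((z - (α : ℂ)) • (1 : Matrix (Fin q) (Fin q) ℂ)) 0 0
            (1 : Matrix (Fin q) (Fin q) ℂ) *
          Matrix.fromBlocks (0 : Matrix (Fin q) (Fin q) ℂ) (-B)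
            ((z - (α : ℂ)) • Y) ((z - (α : ℂ)) • (1 : Matrix (Fin q) (Fin q) ℂ)))ᴴ *
        (-(Jmat q)) *
        (Matrix.fromBlocks ((z - (α : ℂ)) • (1 : Matrix (Fin q) (Fin q) ℂ)) 0 0
            (1 : Matrix (Fin q) (Fin q) ℂ) *
          Matrix.fromBlocks (0 : Matrix (Fin q) (Fin q) ℂ) (-B)
            ((z - (α : ℂ)) • Y) ((z - (α : ℂ)) • (1 : Matrix (Fin q) (Fin q) ℂ))) =
      ((‖z - (α : ℂ)‖ ^ 2 : ℝ) : ℂ) •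
        ((Matrix.fromBlocks B 0 0 Y)ᴴ * (-(Jmat q)) * Matrix.fromBlocks B 0 0 Y) := by
  have hB' : Bᴴ = B := hB
  have h1 : Yᴴ * B = B * Y := by
    have := hY.2.2.1
    rw [conjTranspose_mul, hB'] at this
    exact this
  have habs : ((‖z - (α : ℂ)‖ ^ 2 : ℝ) : ℂ)
      = (starRingEnd ℂ) (z - (α : ℂ)) * (z - (α : ℂ)) := by
    rw [Complex.sq_norm, Complex.normSq_eq_conj_mul_self]
  simp only [Jmat, Matrix.fromBlocks_multiply, Matrix.fromBlocks_conjTranspose,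
    Matrix.fromBlocks_neg, Matrix.fromBlocks_smul, habs,
    conjTranspose_smul, conjTranspose_neg, conjTranspose_zero, conjTranspose_one, hB',
    Matrix.mul_smul, Matrix.smul_mul, Matrix.mul_one, Matrix.one_mul, Matrix.mul_zero,
    Matrix.zero_mul, Matrix.mul_neg, Matrix.neg_mul, smul_zero, zero_add, add_zero,
    smul_smul, neg_zero, neg_neg, smul_neg, Complex.star_def]
  rw [h1, add_neg_cancel]
  congr 2 <;> ring
end
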